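/- Let q, r ∈ [1,∞]. Let G : ℝ² × ℝ → ℂ be measurable such that for every x ∈ ℝ² the function u ↦ G(x,u) is continuously differentiable and compactly supported in the interval (1/2, 5/2), ∂_uG is measurable, G(·,u) ∈ L^q(ℝ²) and ∂_uG(·,u) ∈ L^q(ℝ²) for every u ∈ ℝ, and there exists H ∈ L^q(ℝ²) with |∂_uG(x,u)| ≤ H(x) for all (x,u). Then there is a constant C, depending only on q and r, such that ‖G‖_{L^∞_u L^q_x(ℝ²×ℝ)} ≤ C · ‖G‖_{L^r_u L^q_x(ℝ²×ℝ)}^{1/r′} · ‖∂_uG‖_{L^r_u L^q_x(ℝ²×ℝ)}^{1/r}, where r′ is the conjugate exponent of r (1/r + 1/r′ = 1, with the conventions 1/∞ = 0 and a^0 = 1). -/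

import Mathlib

open MeasureTheory Filter Set
open scoped ENNReal NNReal

noncomputable section

/-- The `L^q(μ)` norm (valued in `ℝ≥0∞`) of an `ℝ≥0∞`-valued function, with the
essential supremum when `q = ∞`. -/
def eLpNormENN {α : Type*} [MeasurableSpace α] (g : α → ℝ≥0∞) (q : ℝ≥0∞)
    (μ : Measure α) : ℝ≥0∞ :=
  if q = ∞ then essSup g μ else (∫⁻ a, g a ^ q.toReal ∂μ) ^ (1 / q.toReal)

/-- The time-space mixed norm `‖F‖_{L^r_u L^q_x(ℝ² × ℝ)}` (over the full line in `u`). -/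
def mixedUXfull (r q : ℝ≥0∞) (F : ℝ × ℝ → ℝ → ℂ) : ℝ≥0∞ :=
  eLpNormENN (fun u => eLpNorm (fun x => F x u) q (volume : Measure (ℝ × ℝ))) r
    (volume : Measure ℝ)

/-! Write `N u = ‖G(·, u)‖_{L^q}` and `M t = ‖∂ᵤG(·, t)‖_{L^q}`. The fundamental theorem of
calculus in `u` and Minkowski's integral inequality give `N a ≤ N b + ∫_a^b M` for `a ≤ b`.
Averaging over `b ∈ (a, a + ℓ]` and applying Hölder's inequality on that interval yields
`N a ≤ ℓ^(-1/r) ‖N‖_{L^r} + ℓ^(1/r') ‖M‖_{L^r}` for every `ℓ > 0`, and `ℓ = ‖N‖_{L^r} / ‖M‖_{L^r}`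
balances the two terms, giving the bound with `C = 2`. The compact support in `u` makes both
`L^r` norms finite, which this choice of `ℓ` requires. -/

open Topology

theorem essSup_le_iff_ae_le {α : Type*} [MeasurableSpace α] {μ : Measure α} {f : α → ℝ≥0∞}
    {c : ℝ≥0∞} : essSup f μ ≤ c ↔ ∀ᵐ x ∂μ, f x ≤ c :=
  ⟨fun h => (ENNReal.ae_le_essSup f).mono fun _ hx => hx.trans h, essSup_le_of_ae_le c⟩

section Measurability

variable {α β : Type*} [MeasurableSpace α] [MeasurableSpace β] {μ : Measure α} [SFinite μ]

theorem measurable_essSup_slice {f : α × β → ℝ≥0∞} (hf : Measurable f) :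
    Measurable fun t => essSup (fun x => f (x, t)) μ := by
  refine measurable_of_Iic fun c => ?_
  have hslice : MeasurableSet {z : α × β | c < f z} := measurableSet_lt measurable_const hf
  convert (measurable_measure_prodMk_right (μ := μ) hslice) (measurableSet_singleton 0) using 1
  ext t
  simp [essSup_le_iff_ae_le, ae_iff]

theorem measurable_eLpNorm_slice {ε : Type*} [ENorm ε] {f : α → β → ε}
    (hf : Measurable fun z : α × β => ‖f z.1 z.2‖ₑ) (p : ℝ≥0∞) :
    Measurable fun t => eLpNorm (fun x => f x t) p μ := by
  rcases eq_or_ne p 0 with rfl | hp0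
  · simp
  rcases eq_or_ne p ∞ with rfl | hptop
  · simpa [eLpNorm_exponent_top, eLpNormEssSup] using measurable_essSup_slice hf
  simp only [eLpNorm_eq_lintegral_rpow_enorm_toReal hp0 hptop]
  exact (((hf.pow_const _).comp measurable_swap).lintegral_prod_right').pow_const _

end Measurability

section Minkowski

variable {α β : Type*} [MeasurableSpace α] [MeasurableSpace β] {μ : Measure α} {ν : Measure β}
  [SFinite μ] [SFinite ν]

theorem lintegral_rpow_lintegral_le {p : ℝ} (hp : 1 < p) {f : α × β → ℝ≥0∞} (hf : Measurable f)
    (hfin : ∫⁻ x, (∫⁻ t, f (x, t) ∂ν) ^ p ∂μ ≠ ∞) :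
    (∫⁻ x, (∫⁻ t, f (x, t) ∂ν) ^ p ∂μ) ^ p⁻¹ ≤ ∫⁻ t, (∫⁻ x, f (x, t) ^ p ∂μ) ^ p⁻¹ ∂ν := by
  set F : α → ℝ≥0∞ := fun x => ∫⁻ t, f (x, t) ∂ν
  set I := ∫⁻ x, F x ^ p ∂μ
  have hF : Measurable F := hf.lintegral_prod_right'
  have hpq := Real.HolderConjugate.conjExponent hp
  set q := p.conjExponent
  rcases eq_or_ne I 0 with hI0 | hI0
  · simp [I, hI0, ENNReal.zero_rpow_of_pos (inv_pos.2 hpq.pos)]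
  -- `I = ∫ F ^ (p - 1) * F`, and Hölder on each slice bounds it by `I ^ q⁻¹` times the right side.
  have hI : I ≤ I ^ q⁻¹ * ∫⁻ t, (∫⁻ x, f (x, t) ^ p ∂μ) ^ p⁻¹ ∂ν := calc
    I = ∫⁻ x, ∫⁻ t, F x ^ (p - 1) * f (x, t) ∂ν ∂μ := by
      refine lintegral_congr fun x => ?_
      rw [lintegral_const_mul (f := fun t => f (x, t)) _ (hf.comp measurable_prodMk_left)]
      simpa using ENNReal.rpow_add_of_nonneg (x := F x) (p - 1) 1 (by linarith) zero_le_one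
    _ = ∫⁻ t, ∫⁻ x, F x ^ (p - 1) * f (x, t) ∂μ ∂ν :=
      lintegral_lintegral_swap (((hF.comp measurable_fst).pow_const _).mul hf).aemeasurable
    _ ≤ ∫⁻ t, I ^ q⁻¹ * (∫⁻ x, f (x, t) ^ p ∂μ) ^ p⁻¹ ∂ν := by
      refine lintegral_mono fun t => ?_
      have := ENNReal.lintegral_mul_le_Lp_mul_Lq μ hpq.symm (hF.pow_const (p - 1)).aemeasurable
        (hf.comp (measurable_prodMk_right (y := t))).aemeasurable
      simpa only [Pi.mul_apply, Function.comp_apply, ← ENNReal.rpow_mul, hpq.sub_one_mul_conj,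
        one_div] using this
    _ = I ^ q⁻¹ * ∫⁻ t, (∫⁻ x, f (x, t) ^ p ∂μ) ^ p⁻¹ ∂ν :=
      lintegral_const_mul _
        (((hf.pow_const p).comp measurable_swap).lintegral_prod_right'.pow_const _)
  have hIq0 : I ^ q⁻¹ ≠ 0 := by simp [hI0, hpq.symm.pos, hpq.symm.pos.le]
  have hIqtop : I ^ q⁻¹ ≠ ∞ := ENNReal.rpow_ne_top_of_nonneg (inv_pos.2 hpq.symm.pos).le hfin
  rw [← ENNReal.mul_le_mul_iff_right hIq0 hIqtop, ← ENNReal.rpow_add _ _ hI0 hfin,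
    add_comm, hpq.inv_add_inv_eq_one, ENNReal.rpow_one]
  exact hI

theorem eLpNorm_lintegral_le_lintegral_eLpNorm {p : ℝ≥0∞} (hp : 1 ≤ p) {f : α × β → ℝ≥0∞}
    (hf : Measurable f) (hfin : eLpNorm (fun x => ∫⁻ t, f (x, t) ∂ν) p μ ≠ ∞) :
    eLpNorm (fun x => ∫⁻ t, f (x, t) ∂ν) p μ ≤ ∫⁻ t, eLpNorm (fun x => f (x, t)) p μ ∂ν := by
  rcases eq_or_ne p ∞ with rfl | hptop
  · simp only [eLpNorm_exponent_top, eLpNormEssSup, enorm_eq_self]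
    have hslice : ∀ᵐ x ∂μ, ∀ᵐ t ∂ν, f (x, t) ≤ essSup (fun y => f (y, t)) μ := by
      rw [Measure.ae_ae_comm (p := fun x t => f (x, t) ≤ essSup (fun y => f (y, t)) μ)
        (measurableSet_le hf ((measurable_essSup_slice hf).comp measurable_snd))]
      exact .of_forall fun t => ENNReal.ae_le_essSup _
    exact essSup_le_of_ae_le _ (hslice.mono fun x hx => lintegral_mono_ae hx)
  rcases hp.eq_or_lt with rfl | hp
  · simp only [eLpNorm_one_eq_lintegral_enorm, enorm_eq_self]
    exact (lintegral_lintegral_swap (f := fun x t => f (x, t)) hf.aemeasurable).le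
  have hp0 : p ≠ 0 := (zero_lt_one.trans hp).ne'
  have hp1 : 1 < p.toReal := by simpa using ENNReal.toReal_strict_mono hptop hp
  simp only [eLpNorm_eq_lintegral_rpow_enorm_toReal hp0 hptop, enorm_eq_self, one_div]
  exact lintegral_rpow_lintegral_le hp1 hf
    (lintegral_rpow_enorm_lt_top_of_eLpNorm_lt_top hp0 hptop hfin.lt_top).ne

end Minkowski

section DerivSlices

variable {α E : Type*} [MeasurableSpace α] {μ : Measure α} [SFinite μ]
  [NormedAddCommGroup E] [NormedSpace ℝ E] [CompleteSpace E]

theorem enorm_sub_le_setLIntegral_enorm_deriv {g : ℝ → E} (hg : ContDiff ℝ 1 g) {a b : ℝ}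
    (hab : a ≤ b) : ‖g b - g a‖ₑ ≤ ∫⁻ t in Ioc a b, ‖deriv g t‖ₑ := by
  rw [← intervalIntegral.integral_deriv_eq_sub
    (fun t _ => (hg.differentiable one_ne_zero).differentiableAt)
    ((hg.continuous_deriv le_rfl).intervalIntegrable a b), intervalIntegral.integral_of_le hab]
  exact enorm_integral_le_lintegral_enorm _

theorem eLpNorm_sub_le_setLIntegral_eLpNorm_deriv {q : ℝ≥0∞} (hq : 1 ≤ q) {G : α → ℝ → E}
    (hG : ∀ x, ContDiff ℝ 1 (G x)) (hG' : Measurable fun z : α × ℝ => ‖deriv (G z.1) z.2‖ₑ)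
    {H : α → ℝ} (hH : MemLp H q μ) (hGH : ∀ x t, ‖deriv (G x) t‖ ≤ H x) {a b : ℝ} (hab : a ≤ b) :
    eLpNorm (fun x => G x b - G x a) q μ ≤
      ∫⁻ t in Ioc a b, eLpNorm (fun x => deriv (G x) t) q μ := by
  have hfin : eLpNorm (fun x => ∫⁻ t in Ioc a b, ‖deriv (G x) t‖ₑ) q μ ≠ ∞ := by
    refine ne_top_of_le_ne_top (hH.const_mul (b - a)).eLpNorm_ne_top
      (eLpNorm_mono_enorm fun x => ?_)
    calc ‖∫⁻ t in Ioc a b, ‖deriv (G x) t‖ₑ‖ₑ ≤ ∫⁻ _ in Ioc a b, ENNReal.ofReal (H x) := by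
          rw [enorm_eq_self]
          refine lintegral_mono fun t => ?_
          rw [← ofReal_norm]
          exact ENNReal.ofReal_le_ofReal (hGH x t)
      _ = ENNReal.ofReal ((b - a) * H x) := by
          rw [setLIntegral_const, Real.volume_Ioc, ← ENNReal.ofReal_mul' (sub_nonneg.2 hab),
            mul_comm]
      _ ≤ ‖(b - a) * H x‖ₑ := Real.ofReal_le_enorm _
  calc eLpNorm (fun x => G x b - G x a) q μ
      ≤ eLpNorm (fun x => ∫⁻ t in Ioc a b, ‖deriv (G x) t‖ₑ) q μ :=
        eLpNorm_mono_enorm fun x => by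
          rw [enorm_eq_self]
          exact enorm_sub_le_setLIntegral_enorm_deriv (hG x) hab
    _ ≤ ∫⁻ t in Ioc a b, eLpNorm (fun x => ‖deriv (G x) t‖ₑ) q μ :=
        eLpNorm_lintegral_le_lintegral_eLpNorm (f := fun z => ‖deriv (G z.1) z.2‖ₑ) hq hG' hfin
    _ = ∫⁻ t in Ioc a b, eLpNorm (fun x => deriv (G x) t) q μ := by simp_rw [eLpNorm_enorm]

theorem eLpNorm_le_add_setLIntegral_eLpNorm_deriv {q : ℝ≥0∞} (hq : 1 ≤ q) {G : α → ℝ → E}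
    (hGm : ∀ u, AEStronglyMeasurable (fun x => G x u) μ) (hG : ∀ x, ContDiff ℝ 1 (G x))
    (hG' : Measurable fun z : α × ℝ => ‖deriv (G z.1) z.2‖ₑ)
    {H : α → ℝ} (hH : MemLp H q μ) (hGH : ∀ x t, ‖deriv (G x) t‖ ≤ H x) {a b : ℝ} (hab : a ≤ b) :
    eLpNorm (fun x => G x a) q μ ≤
      eLpNorm (fun x => G x b) q μ + ∫⁻ t in Ioc a b, eLpNorm (fun x => deriv (G x) t) q μ := calc
  eLpNorm (fun x => G x a) q μ = eLpNorm ((fun x => G x b) - fun x => G x b - G x a) q μ := by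
    congr 1; ext; simp
  _ ≤ eLpNorm (fun x => G x b) q μ + eLpNorm (fun x => G x b - G x a) q μ :=
    eLpNorm_sub_le (hGm b) ((hGm b).sub (hGm a)) hq
  _ ≤ _ := by
    gcongr
    exact eLpNorm_sub_le_setLIntegral_eLpNorm_deriv hq hG hG' hH hGH hab

end DerivSlices

theorem setLIntegral_le_eLpNorm_mul_rpow {α : Type*} [MeasurableSpace α] {μ : Measure α}
    {f : α → ℝ≥0∞} (hf : AEMeasurable f μ) {r : ℝ≥0∞} (hr : 1 ≤ r) (s : Set α) :
    ∫⁻ x in s, f x ∂μ ≤ eLpNorm f r μ * μ s ^ (1 - (r⁻¹).toReal) := calc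
  ∫⁻ x in s, f x ∂μ = eLpNorm f 1 (μ.restrict s) := by
    simp only [eLpNorm_one_eq_lintegral_enorm, enorm_eq_self]
  _ ≤ eLpNorm f r (μ.restrict s) * μ.restrict s univ ^ (1 / (1 : ℝ≥0∞).toReal - 1 / r.toReal) :=
    eLpNorm_le_eLpNorm_mul_rpow_measure_univ hr hf.restrict.aestronglyMeasurable
  _ ≤ eLpNorm f r μ * μ s ^ (1 - (r⁻¹).toReal) := by
    rw [Measure.restrict_apply_univ, ENNReal.toReal_inv, ENNReal.toReal_one, div_one, one_div]
    gcongr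
    exact Measure.restrict_le_self

theorem rpow_neg_mul_add_rpow_one_sub_mul_le {x y a b s : ℝ} (hx : 0 < x) (hy : 0 < y)
    (ha : a ≤ x) (hb : b ≤ y) :
    (x / y) ^ (-s) * a + (x / y) ^ (1 - s) * b ≤ 2 * x ^ (1 - s) * y ^ s := by
  have hxy : 0 < x / y := div_pos hx hy
  have h₁ : (x / y) ^ (-s) * x = x ^ (1 - s) * y ^ s := by
    rw [Real.div_rpow hx.le hy.le, Real.rpow_neg hx.le, Real.rpow_neg hy.le, Real.rpow_sub hx,
      Real.rpow_one]
    field_simp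
  have h₂ : (x / y) ^ (1 - s) * y = x ^ (1 - s) * y ^ s := by
    rw [Real.div_rpow hx.le hy.le, Real.rpow_sub hy, Real.rpow_one]
    field_simp
  have hxa := mul_le_mul_of_nonneg_left ha (Real.rpow_nonneg hxy.le (-s))
  have hyb := mul_le_mul_of_nonneg_left hb (Real.rpow_nonneg hxy.le (1 - s))
  linarith

theorem le_two_mul_rpow_mul_rpow_of_forall_le_add {X A B : ℝ≥0∞} {s : ℝ} (hs₀ : 0 ≤ s)
    (hs₁ : s ≤ 1) (hA : A ≠ ∞) (hB : B ≠ ∞)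
    (h : ∀ ℓ : ℝ, 0 < ℓ → X ≤ ENNReal.ofReal ℓ ^ (-s) * A + ENNReal.ofReal ℓ ^ (1 - s) * B) :
    X ≤ 2 * A ^ (1 - s) * B ^ s := by
  set a := A.toReal
  set b := B.toReal
  have ha : 0 ≤ a := ENNReal.toReal_nonneg
  have hb : 0 ≤ b := ENNReal.toReal_nonneg
  -- The optimal length `a / b` is perturbed to `(a + ε) / (b + ε)` to avoid dividing by zero.
  have hε : ∀ ε : ℝ, 0 < ε → X ≤ ENNReal.ofReal (2 * (a + ε) ^ (1 - s) * (b + ε) ^ s) := by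
    intro ε hε
    have hℓ : 0 < (a + ε) / (b + ε) := by positivity
    refine (h _ hℓ).trans ?_
    rw [← ENNReal.ofReal_toReal hA, ← ENNReal.ofReal_toReal hB, ENNReal.ofReal_rpow_of_pos hℓ,
      ENNReal.ofReal_rpow_of_pos hℓ, ← ENNReal.ofReal_mul (by positivity),
      ← ENNReal.ofReal_mul (by positivity), ← ENNReal.ofReal_add (by positivity) (by positivity)]
    exact ENNReal.ofReal_le_ofReal (rpow_neg_mul_add_rpow_one_sub_mul_le (by positivity)
      (by positivity) (by linarith) (by linarith))
  have hlim : Tendsto (fun ε => ENNReal.ofReal (2 * (a + ε) ^ (1 - s) * (b + ε) ^ s)) (𝓝[>] 0)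
      (𝓝 (ENNReal.ofReal (2 * a ^ (1 - s) * b ^ s))) := by
    refine ENNReal.tendsto_ofReal (tendsto_nhdsWithin_of_tendsto_nhds ?_)
    have hcont : Continuous fun ε : ℝ => 2 * (a + ε) ^ (1 - s) * (b + ε) ^ s :=
      (continuous_const.mul ((continuous_const.add continuous_id).rpow_const
        fun _ => Or.inr (by linarith))).mul ((continuous_const.add continuous_id).rpow_const
        fun _ => Or.inr hs₀)
    simpa using hcont.tendsto 0
  calc X ≤ ENNReal.ofReal (2 * a ^ (1 - s) * b ^ s) :=
        ge_of_tendsto hlim (eventually_nhdsWithin_of_forall hε)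
    _ = 2 * A ^ (1 - s) * B ^ s := by
        rw [ENNReal.ofReal_mul (by positivity), ENNReal.ofReal_mul (by positivity),
          ← ENNReal.ofReal_rpow_of_nonneg ha (by linarith), ← ENNReal.ofReal_rpow_of_nonneg hb hs₀,
          ENNReal.ofReal_toReal hA, ENNReal.ofReal_toReal hB, ENNReal.ofReal_ofNat]

theorem eLpNorm_ne_top_of_le_of_eq_zero_off {α : Type*} [MeasurableSpace α] {μ : Measure α}
    {f : α → ℝ≥0∞} {s : Set α} {C : ℝ≥0∞} (hs : μ s ≠ ∞) (hC : C ≠ ∞)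
    (hle : ∀ x ∈ s, f x ≤ C) (hzero : ∀ x ∉ s, f x = 0) (p : ℝ≥0∞) : eLpNorm f p μ ≠ ∞ := by
  have hf : ∀ x, f x ≤ s.indicator (fun _ => C) x := fun x => by
    by_cases hx : x ∈ s
    · simpa [hx] using hle x hx
    · simp [hx, hzero x hx]
  have hind : eLpNorm f p μ ≤ ‖C‖ₑ * μ s ^ (1 / p.toReal) :=
    (eLpNorm_mono_enorm fun x => by simpa using hf x).trans
      (eLpNorm_indicator_const_le (s := s) C p)
  exact ne_top_of_le_ne_top
    (ENNReal.mul_ne_top (by simpa using hC) (ENNReal.rpow_ne_top_of_nonneg (by positivity) hs)) hind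

section SupBound

variable {N M : ℝ → ℝ≥0∞}

theorem le_setLIntegral_div_add_of_le_add
    (hNM : ∀ a b, a ≤ b → N a ≤ N b + ∫⁻ t in Ioc a b, M t) (a : ℝ) {ℓ : ℝ} (hℓ : 0 < ℓ) :
    N a ≤ (∫⁻ u in Ioc a (a + ℓ), N u) / ENNReal.ofReal ℓ + ∫⁻ t in Ioc a (a + ℓ), M t := by
  have hvol : volume (Ioc a (a + ℓ)) = ENNReal.ofReal ℓ := by simp
  have hL₀ : ENNReal.ofReal ℓ ≠ 0 := ENNReal.ofReal_pos.2 hℓ |>.ne'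
  have hint : N a * ENNReal.ofReal ℓ ≤
      (∫⁻ u in Ioc a (a + ℓ), N u) + (∫⁻ t in Ioc a (a + ℓ), M t) * ENNReal.ofReal ℓ := calc
    N a * ENNReal.ofReal ℓ = ∫⁻ _ in Ioc a (a + ℓ), N a := by rw [setLIntegral_const, hvol]
    _ ≤ ∫⁻ u in Ioc a (a + ℓ), (N u + ∫⁻ t in Ioc a (a + ℓ), M t) :=
      setLIntegral_mono' measurableSet_Ioc fun u hu => (hNM a u hu.1.le).trans
        (add_le_add le_rfl (lintegral_mono_set (Ioc_subset_Ioc_right hu.2)))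
    _ = _ := by rw [lintegral_add_right _ measurable_const, setLIntegral_const, hvol]
  calc N a = N a * ENNReal.ofReal ℓ / ENNReal.ofReal ℓ :=
        (ENNReal.mul_div_cancel_right hL₀ ENNReal.ofReal_ne_top).symm
    _ ≤ ((∫⁻ u in Ioc a (a + ℓ), N u) + (∫⁻ t in Ioc a (a + ℓ), M t) * ENNReal.ofReal ℓ) /
        ENNReal.ofReal ℓ := by gcongr
    _ = _ := by rw [ENNReal.add_div, ENNReal.mul_div_cancel_right hL₀ ENNReal.ofReal_ne_top]

theorem le_rpow_mul_eLpNorm_add_rpow_mul_eLpNorm (hN : AEMeasurable N) (hM : AEMeasurable M)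
    {r : ℝ≥0∞} (hr : 1 ≤ r) (hNM : ∀ a b, a ≤ b → N a ≤ N b + ∫⁻ t in Ioc a b, M t) (a : ℝ)
    {ℓ : ℝ} (hℓ : 0 < ℓ) :
    N a ≤ ENNReal.ofReal ℓ ^ (-(r⁻¹).toReal) * eLpNorm N r +
      ENNReal.ofReal ℓ ^ (1 - (r⁻¹).toReal) * eLpNorm M r := by
  set L := ENNReal.ofReal ℓ
  have hvol : volume (Ioc a (a + ℓ)) = L := by simp [L]
  have hL₀ : L ≠ 0 := ENNReal.ofReal_pos.2 hℓ |>.ne'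
  have hLtop : L ≠ ∞ := ENNReal.ofReal_ne_top
  calc N a ≤ (∫⁻ u in Ioc a (a + ℓ), N u) / L + ∫⁻ t in Ioc a (a + ℓ), M t :=
        le_setLIntegral_div_add_of_le_add hNM a hℓ
    _ ≤ eLpNorm N r * L ^ (1 - (r⁻¹).toReal) / L + eLpNorm M r * L ^ (1 - (r⁻¹).toReal) := by
        rw [← hvol]
        gcongr
        · exact setLIntegral_le_eLpNorm_mul_rpow hN hr _
        · exact setLIntegral_le_eLpNorm_mul_rpow hM hr _
    _ = _ := by
        have hLs : L ^ (1 - (r⁻¹).toReal) / L = L ^ (-(r⁻¹).toReal) := by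
          rw [ENNReal.div_eq_inv_mul, ← ENNReal.rpow_neg_one, ← ENNReal.rpow_add _ _ hL₀ hLtop]
          ring_nf
        rw [mul_div_assoc, hLs]
        ring

theorem iSup_le_two_mul_eLpNorm_rpow_mul_eLpNorm_rpow (hN : AEMeasurable N)
    (hM : AEMeasurable M) {r : ℝ≥0∞} (hr : 1 ≤ r)
    (hNM : ∀ a b, a ≤ b → N a ≤ N b + ∫⁻ t in Ioc a b, M t) (hNr : eLpNorm N r ≠ ∞)
    (hMr : eLpNorm M r ≠ ∞) :
    ⨆ u, N u ≤ 2 * eLpNorm N r ^ (1 - (r⁻¹).toReal) * eLpNorm M r ^ (r⁻¹).toReal :=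
  iSup_le fun a => le_two_mul_rpow_mul_rpow_of_forall_le_add ENNReal.toReal_nonneg
    (by simpa using ENNReal.toReal_mono ENNReal.one_ne_top (ENNReal.inv_le_one.2 hr)) hNr hMr
    fun _ hℓ => le_rpow_mul_eLpNorm_add_rpow_mul_eLpNorm hN hM hr hNM a hℓ

theorem eLpNorm_ne_top_of_le_add_of_eq_zero_off
    (hNM : ∀ a b, a ≤ b → N a ≤ N b + ∫⁻ t in Ioc a b, M t) {a b : ℝ}
    (hN : ∀ u ∉ Ioo a b, N u = 0) (hM : ∫⁻ t, M t ≠ ∞) (p : ℝ≥0∞) : eLpNorm N p volume ≠ ∞ :=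
  eLpNorm_ne_top_of_le_of_eq_zero_off (s := Icc a b) measure_Icc_lt_top.ne hM
    (fun u hu => calc
      N u ≤ N b + ∫⁻ t in Ioc u b, M t := hNM u b hu.2
      _ ≤ ∫⁻ t, M t := by simpa [hN b (by simp)] using setLIntegral_le_lintegral _ _)
    (fun u hu => hN u fun h => hu (Ioo_subset_Icc_self h)) p

end SupBound

theorem eLpNormENN_eq_eLpNorm {α : Type*} [MeasurableSpace α] (g : α → ℝ≥0∞) {r : ℝ≥0∞}
    (hr : r ≠ 0) (μ : Measure α) : eLpNormENN g r μ = eLpNorm g r μ := by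
  rcases eq_or_ne r ∞ with rfl | hrtop
  · simp [eLpNormENN, eLpNorm_exponent_top, eLpNormEssSup]
  · simp [eLpNormENN, eLpNorm_eq_lintegral_rpow_enorm_toReal hr hrtop, hrtop]

theorem timeSpace_sup_interpolation_general (q r : ℝ≥0∞) (hq : 1 ≤ q) (hr : 1 ≤ r)
    (G : ℝ × ℝ → ℝ → ℂ)
    (hGmeas : Measurable (fun p : (ℝ × ℝ) × ℝ => G p.1 p.2))
    (hGC1 : ∀ x, ContDiff ℝ 1 (G x))
    (hGsupp : ∀ x, Function.support (G x) ⊆ Set.Ioo (1/2 : ℝ) (5/2))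
    (hG'meas : Measurable (fun p : (ℝ × ℝ) × ℝ => deriv (G p.1) p.2))
    (hdom : ∃ H : ℝ × ℝ → ℝ, MemLp H q (volume : Measure (ℝ × ℝ)) ∧
      ∀ x u, ‖deriv (G x) u‖ ≤ H x) :
    ∃ C : ℝ, 0 < C ∧
      (⨆ u : ℝ, eLpNorm (fun x => G x u) q (volume : Measure (ℝ × ℝ))) ≤
        ENNReal.ofReal C *
          (mixedUXfull r q G) ^ (1 - (r⁻¹).toReal) *
          (mixedUXfull r q (fun x u => deriv (G x) u)) ^ (r⁻¹).toReal := by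
  obtain ⟨H, hH, hGH⟩ := hdom
  set N : ℝ → ℝ≥0∞ := fun u => eLpNorm (fun x => G x u) q volume
  set M : ℝ → ℝ≥0∞ := fun t => eLpNorm (fun x => deriv (G x) t) q volume
  have hG'supp : ∀ x, Function.support (deriv (G x)) ⊆ Icc (1/2 : ℝ) (5/2) := fun x =>
    support_deriv_subset.trans (closure_Ioo (by norm_num : (1/2 : ℝ) ≠ 5/2) ▸
      closure_mono (hGsupp x))
  have hNM : ∀ a b, a ≤ b → N a ≤ N b + ∫⁻ t in Ioc a b, M t := fun a b hab =>
    eLpNorm_le_add_setLIntegral_eLpNorm_deriv hq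
      (fun u => (hGmeas.comp measurable_prodMk_right).aestronglyMeasurable) hGC1 hG'meas.enorm hH
      hGH hab
  have hMr : ∀ p, eLpNorm M p volume ≠ ∞ :=
    eLpNorm_ne_top_of_le_of_eq_zero_off (s := Icc (1/2) (5/2)) measure_Icc_lt_top.ne
      hH.eLpNorm_ne_top (fun t _ => eLpNorm_mono_real fun x => hGH x t)
      fun t ht => by simp [M, Function.notMem_support.1 fun h => ht (hG'supp _ h)]
  have hNr : eLpNorm N r volume ≠ ∞ :=
    eLpNorm_ne_top_of_le_add_of_eq_zero_off hNM (a := 1/2) (b := 5/2)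
      (fun u hu => by simp [N, Function.notMem_support.1 fun h => hu (hGsupp _ h)])
      (by simpa [eLpNorm_one_eq_lintegral_enorm] using hMr 1) r
  refine ⟨2, two_pos, ?_⟩
  rw [ENNReal.ofReal_ofNat, mixedUXfull, mixedUXfull, eLpNormENN_eq_eLpNorm _ (by positivity),
    eLpNormENN_eq_eLpNorm _ (by positivity)]
  exact iSup_le_two_mul_eLpNorm_rpow_mul_eLpNorm_rpow
    (measurable_eLpNorm_slice hGmeas.enorm q).aemeasurable
    (measurable_eLpNorm_slice hG'meas.enorm q).aemeasurable hr hNM hNr (hMr r)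

/-- Lemma 5.a: for `G(x,·) ∈ C_c¹((1/2,5/2))` with the stated integrability
hypotheses, `‖G‖_{L^∞_u L^q_x} ≲ ‖G‖_{L^r_u L^q_x}^{1/r'} ‖∂_u G‖_{L^r_u L^q_x}^{1/r}`,
where the outer `L^∞_u` norm is the pointwise supremum in `u`. -/
theorem timeSpace_sup_interpolation (q r : ℝ≥0∞) (hq : 1 ≤ q) (hr : 1 ≤ r)
    (G : ℝ × ℝ → ℝ → ℂ)
    (hGmeas : Measurable (fun p : (ℝ × ℝ) × ℝ => G p.1 p.2))
    (hGC1 : ∀ x, ContDiff ℝ 1 (G x))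
    (hGsupp : ∀ x, Function.support (G x) ⊆ Set.Ioo (1/2 : ℝ) (5/2))
    (hG'meas : Measurable (fun p : (ℝ × ℝ) × ℝ => deriv (G p.1) p.2))
    (hGq : ∀ u : ℝ, MemLp (fun x => G x u) q (volume : Measure (ℝ × ℝ)))
    (hG'q : ∀ u : ℝ, MemLp (fun x => deriv (G x) u) q (volume : Measure (ℝ × ℝ)))
    (hdom : ∃ H : ℝ × ℝ → ℝ, MemLp H q (volume : Measure (ℝ × ℝ)) ∧
      ∀ x u, ‖deriv (G x) u‖ ≤ H x) :
    ∃ C : ℝ, 0 < C ∧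
      (⨆ u : ℝ, eLpNorm (fun x => G x u) q (volume : Measure (ℝ × ℝ))) ≤
        ENNReal.ofReal C *
          (mixedUXfull r q G) ^ (1 - (r⁻¹).toReal) *
          (mixedUXfull r q (fun x u => deriv (G x) u)) ^ (r⁻¹).toReal :=
  timeSpace_sup_interpolation_general q r hq hr G hGmeas hGC1 hGsupp hG'meas hdom

end
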